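/- arXiv:1406.4301 — 2 statements merged into one kernel-verified Lean document; each statement's English description precedes it below -/
import Mathlib

section
/- In a risk-neutral HJM-type multiple yield curve model in which the spreads satisfy the conditional expectation hypothesis S^{δ_i}(t,T) = E^{Q^T}[exp(u_i^⊤ Y_T) | F_t], if Y takes values in a closed convex cone C ⊂ R^n and u_i ∈ C* (the dual cone) for all i, then S^{δ_i}(t,T) ≥ 1 for all 0 ≤ t ≤ T. Moreover, if u_1 ⪯ u_2 ⪯ ... ⪯ u_m in the partial order induced by C*, i.e., (u_j − u_i)^⊤ y ≥ 0 for all y ∈ C whenever i < j, then S^{δ_1}(t,T) ≤ S^{δ_2}(t,T) ≤ ... ≤ S^{δ_m}(t,T) for all 0 ≤ t ≤ T. -/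
open MeasureTheory Matrix

/-- in a risk-neutral HJM-type multiple yield curve model with
`S^{δ_i}(t,T) = E^{Q^T}[exp(u_i^⊤ Y_T) | F_t]`, if `Y` takes values in a closed
convex cone `C ⊆ ℝ^n` and each `u_i` lies in the dual cone `C*`, then
`S^{δ_i}(t,T) ≥ 1` for all `0 ≤ t ≤ T`; moreover if the `u_i` are ordered in
the partial order of `C*` (i.e. `(u_j − u_i)^⊤ y ≥ 0` for all `y ∈ C`, `i ≤ j`),
then the spreads are ordered: `S^{δ_i}(t,T) ≤ S^{δ_j}(t,T)`. -/
theorem spreads_ge_one_and_ordered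
    {Ω : Type*} {m0 : MeasurableSpace Ω} (ℱ : Filtration ℝ m0)
    (QT : ℝ → Measure Ω) [∀ T, IsProbabilityMeasure (QT T)]
    {n m : ℕ} (C : Set (Fin n → ℝ))
    (hCconv : Convex ℝ C) (hCclosed : IsClosed C)
    (hCcone : ∀ c : ℝ, 0 ≤ c → ∀ y ∈ C, c • y ∈ C)
    (Y : ℝ → Ω → (Fin n → ℝ))
    (hYad : ∀ t, StronglyMeasurable[ℱ t] (Y t))
    (hYC : ∀ t ω, Y t ω ∈ C)
    (u : Fin m → (Fin n → ℝ))
    (hdual : ∀ i, ∀ y ∈ C, 0 ≤ u i ⬝ᵥ y)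
    (hint : ∀ (i : Fin m) (T : ℝ),
      Integrable (fun ω => Real.exp (u i ⬝ᵥ Y T ω)) (QT T)) :
    (∀ (i : Fin m) (t T : ℝ), 0 ≤ t → t ≤ T →
      (fun _ => (1 : ℝ)) ≤ᵐ[QT T]
        (QT T)[fun ω => Real.exp (u i ⬝ᵥ Y T ω) | ℱ t]) ∧
    (∀ i j : Fin m, i ≤ j → (∀ y ∈ C, 0 ≤ (u j - u i) ⬝ᵥ y) →
      ∀ t T : ℝ, 0 ≤ t → t ≤ T →
        (QT T)[fun ω => Real.exp (u i ⬝ᵥ Y T ω) | ℱ t]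
          ≤ᵐ[QT T] (QT T)[fun ω => Real.exp (u j ⬝ᵥ Y T ω) | ℱ t]) := by
  constructor
  · intro i t T ht htT
    have h1 : (fun _ : Ω => (1:ℝ)) ≤ᵐ[QT T] fun ω => Real.exp (u i ⬝ᵥ Y T ω) := by
      filter_upwards with ω
      have := hdual i _ (hYC T ω)
      simpa using Real.one_le_exp this
    calc (fun _ : Ω => (1:ℝ)) = (QT T)[fun _ => (1:ℝ) | ℱ t] :=
          (condExp_const (ℱ.le t) 1).symm
      _ ≤ᵐ[QT T] (QT T)[fun ω => Real.exp (u i ⬝ᵥ Y T ω) | ℱ t] :=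
          condExp_mono (integrable_const 1) (hint i T) h1
  · intro i j hij hord t T ht htT
    refine condExp_mono (hint i T) (hint j T) ?_
    filter_upwards with ω
    have h := hord _ (hYC T ω)
    have : u i ⬝ᵥ Y T ω ≤ u j ⬝ᵥ Y T ω := by
      have := sub_dotProduct (u j) (u i) (Y T ω) ▸ h
      linarith [sub_dotProduct (u j) (u i) (Y T ω) ▸ h]
    exact Real.exp_le_exp.mpr this
end

section
/- Let 0 < u_1 < ... < u_m be real numbers, g_i(ξ) := e^{u_i ξ} − 1 for i = 1,...,m, and g_{m+1}(ξ) := (|ξ| ∨ 1) e^{(u_m ∨ 1)|ξ|}. For y ≥ 0, there exists a non-negative measure K(dξ) on [−y,∞) satisfying ∫ g_i(ξ) K(dξ) = p^i for i=1,...,m and ∫ g_{m+1}(ξ) K(dξ) = p^{m+1} if and only if (p^1,...,p^{m+1}) lies in the closed conic hull of the set {(g_1(ξ),...,g_{m+1}(ξ)) : ξ ∈ [−y,∞)} ⊂ R^{m+1}. -/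
open MeasureTheory

namespace Stmt12

/-- The test functions of the generalized moment problem:
`g_i(ξ) = e^{u_i ξ} − 1` for `i < m` and
`g_{m+1}(ξ) = (|ξ| ∨ 1) e^{(u_m ∨ 1)|ξ|}` (here `um = u_m`). -/
noncomputable def g (m : ℕ) (u : Fin m → ℝ) (um : ℝ)
    (i : Fin (m + 1)) (ξ : ℝ) : ℝ :=
  if h : (i : ℕ) < m then Real.exp (u ⟨i, h⟩ * ξ) - 1
  else (max |ξ| 1) * Real.exp (max um 1 * |ξ|)

end Stmt12

/-!
Both sides describe the cone generated by the curve `ξ ↦ (g_i(ξ))_i`, `ξ ≥ -y`.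
A representing measure averages points of this cone, so its moment vector lies in the closed
cone (Farkas' lemma). Conversely, the cone is already closed: dividing by `g_{m+1} ≥ 1` moves the
curve into the hyperplane `x_{m+1} = 1`, and since `g_{m+1}` dominates the other `g_i` at `+∞`
the normalized curve tends to its value `e_{m+1}` at `ξ = 0`, so its image is compact. The cone
over a compact set in a hyperplane missing the origin is closed, hence every point of the closed
cone is a finite conic combination, i.e. the moment vector of a finite atomic measure.
-/

open Set Filter Topology Pointwise

theorem IsCompact.convexHull_of_finiteDimensional {E : Type*} [AddCommGroup E] [Module ℝ E]
    [TopologicalSpace E] [IsTopologicalAddGroup E] [ContinuousSMul ℝ E] [FiniteDimensional ℝ E]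
    {s : Set E} (hs : IsCompact s) : IsCompact (convexHull ℝ s) := by
  let comb (k : ℕ) (q : (Fin k → ℝ) × (Fin k → E)) : E := ∑ j, q.1 j • q.2 j
  have hcomb (k : ℕ) : Continuous (comb k) := by fun_prop
  -- Carathéodory: `finrank ℝ E + 1` points of `s` suffice.
  have hhull : convexHull ℝ s =
      ⋃ k ∈ Iic (Module.finrank ℝ E + 1),
        comb k '' (stdSimplex ℝ (Fin k) ×ˢ univ.pi fun _ => s) := by
    refine Subset.antisymm (fun x hx => ?_) ?_
    · obtain ⟨ι, _, z, w, hzs, hind, hw₀, hw₁, rfl⟩ := eq_pos_convex_span_of_mem_convexHull hx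
      let e := Fintype.equivFin ι
      have hcard : Fintype.card ι ≤ Module.finrank ℝ E + 1 :=
        hind.card_le_finrank_succ.trans (Nat.succ_le_succ (Submodule.finrank_le _))
      refine mem_biUnion hcard ⟨(w ∘ e.symm, z ∘ e.symm), ⟨⟨fun j => (hw₀ _).le, ?_⟩,
        fun j _ => hzs (mem_range_self _)⟩, e.symm.sum_comp fun i => w i • z i⟩
      simpa using (e.symm.sum_comp w).trans hw₁
    · refine iUnion₂_subset fun k _ => ?_
      rintro x ⟨⟨w, z⟩, ⟨⟨hw₀, hw₁⟩, hz⟩, rfl⟩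
      exact mem_convexHull_of_exists_fintype w z hw₀ hw₁ (fun j => hz j (mem_univ j)) rfl
  rw [hhull]
  exact (finite_Iic _).isCompact_biUnion fun k _ =>
    ((isCompact_stdSimplex ℝ (Fin k)).prod (isCompact_univ_pi fun _ => hs)).image (hcomb k)

namespace PointedCone

section OrderedSemiring

variable {R E α : Type*} [Semiring R] [PartialOrder R] [IsOrderedRing R]
  [AddCommMonoid E] [Module R E]

theorem mem_hull_iff_exists_fin {s : Set E} {x : E} :
    x ∈ hull R s ↔ ∃ (k : ℕ) (c : Fin k → R) (z : Fin k → E),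
      (∀ j, 0 ≤ c j) ∧ (∀ j, z j ∈ s) ∧ x = ∑ j, c j • z j := by
  rw [hull, Submodule.mem_span_set']
  constructor
  · rintro ⟨k, c, z, rfl⟩
    exact ⟨k, fun j => c j, fun j => z j, fun j => (c j).2, fun j => (z j).2, rfl⟩
  · rintro ⟨k, c, z, hc, hz, rfl⟩
    exact ⟨k, fun j => ⟨c j, hc j⟩, fun j => ⟨z j, hz j⟩, rfl⟩

theorem mem_hull_image_iff_exists_fin {f : α → E} {s : Set α} {x : E} :
    x ∈ hull R (f '' s) ↔ ∃ (k : ℕ) (c : Fin k → R) (a : Fin k → α),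
      (∀ j, 0 ≤ c j) ∧ (∀ j, a j ∈ s) ∧ x = ∑ j, c j • f (a j) := by
  rw [mem_hull_iff_exists_fin]
  constructor
  · rintro ⟨k, c, z, hc, hz, rfl⟩
    choose a has hfa using hz
    exact ⟨k, c, a, hc, has, by simp only [hfa]⟩
  · rintro ⟨k, c, a, hc, has, rfl⟩
    exact ⟨k, c, f ∘ a, hc, fun j => mem_image_of_mem f (has j), rfl⟩

end OrderedSemiring

section OrderedField

variable {𝕜 E α : Type*} [Field 𝕜] [LinearOrder 𝕜] [IsStrictOrderedRing 𝕜]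
  [AddCommGroup E] [Module 𝕜 E]

theorem hull_image_smul_of_pos {f : α → E} {r : α → 𝕜} {s : Set α} (hr : ∀ a ∈ s, 0 < r a) :
    hull 𝕜 ((fun a => r a • f a) '' s) = hull 𝕜 (f '' s) := by
  refine le_antisymm (Submodule.span_le.2 ?_) (Submodule.span_le.2 ?_)
  · rintro _ ⟨a, ha, rfl⟩
    exact (hull 𝕜 (f '' s)).smul_mem (hr a ha).le (subset_hull ⟨a, ha, rfl⟩)
  · rintro _ ⟨a, ha, rfl⟩
    exact ((hull 𝕜 _).smul_mem_iff (hr a ha)).1 (subset_hull ⟨a, ha, rfl⟩)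

theorem coe_hull_eq_Ici_smul_convexHull {s : Set E} (hs : s.Nonempty) :
    (hull 𝕜 s : Set E) = Ici (0 : 𝕜) • convexHull 𝕜 s := by
  refine Subset.antisymm (fun x hx => ?_) ?_
  · obtain ⟨k, c, z, hc, hz, rfl⟩ := mem_hull_iff_exists_fin.1 hx
    rcases (Finset.sum_nonneg fun j _ => hc j : 0 ≤ ∑ j, c j).eq_or_lt with hT | hT
    · obtain ⟨z₀, hz₀⟩ := hs
      have hc0 : ∀ j, c j = 0 := fun j =>
        (Finset.sum_eq_zero_iff_of_nonneg fun j _ => hc j).1 hT.symm j (Finset.mem_univ j)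
      exact ⟨0, self_mem_Ici, z₀, subset_convexHull 𝕜 s hz₀, by simp [hc0]⟩
    · refine ⟨∑ j, c j, hT.le, Finset.univ.centerMass c z,
        Finset.univ.centerMass_mem_convexHull (fun j _ => hc j) hT fun j _ => hz j, ?_⟩
      exact smul_inv_smul₀ hT.ne' _
  · rintro _ ⟨t, ht, w, hw, rfl⟩
    exact (hull 𝕜 s).smul_mem ht (convexHull_min subset_hull (hull 𝕜 s).convex hw)

end OrderedField

end PointedCone

section ConeOverCompact

variable {E : Type*} [AddCommGroup E] [Module ℝ E] [TopologicalSpace E]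
  [ContinuousSMul ℝ E] [T2Space E]

theorem IsCompact.isClosed_Ici_smul {A : Set E} (hA : IsCompact A) (ℓ : E →L[ℝ] ℝ)
    (hℓ : ∀ w ∈ A, ℓ w = 1) : IsClosed (Ici (0 : ℝ) • A) := by
  refine isClosed_of_closure_subset fun x hx => ?_
  -- Near `x` the cone coincides with its compact truncation at height `ℓ x + 1`.
  let V : Set E := ℓ ⁻¹' Iio (ℓ x + 1)
  have hV : IsOpen V := isOpen_Iio.preimage ℓ.continuous
  have hcut : Ici (0 : ℝ) • A ∩ V ⊆ Icc 0 (ℓ x + 1) • A := by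
    rintro _ ⟨⟨t, ht, w, hw, rfl⟩, hV⟩
    have htw : ℓ (t • w) = t := by rw [map_smul, hℓ w hw, smul_eq_mul, mul_one]
    exact ⟨t, ⟨ht, (htw ▸ hV : t < ℓ x + 1).le⟩, w, hw, rfl⟩
  have hx' : x ∈ closure (Ici (0 : ℝ) • A ∩ V) := by
    simpa [inter_comm] using hV.inter_closure ⟨by simp [V], hx⟩
  exact smul_subset_smul_right Icc_subset_Ici_self
    ((isCompact_Icc.smul_set hA).isClosed.closure_subset (closure_mono hcut hx'))

theorem PointedCone.isClosed_hull_of_isCompact [IsTopologicalAddGroup E] [FiniteDimensional ℝ E]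
    {s : Set E} (hs : IsCompact s) (ℓ : E →L[ℝ] ℝ) (hℓ : ∀ z ∈ s, ℓ z = 1) :
    IsClosed (hull ℝ s : Set E) := by
  rcases s.eq_empty_or_nonempty with rfl | hne
  · simp
  rw [coe_hull_eq_Ici_smul_convexHull hne]
  exact hs.convexHull_of_finiteDimensional.isClosed_Ici_smul ℓ fun w hw =>
    convexHull_min hℓ ((convex_singleton 1).linear_preimage ℓ.toLinearMap) hw

end ConeOverCompact

theorem isCompact_image_Ici_of_tendsto_atTop {X : Type*} [TopologicalSpace X] {f : ℝ → X}
    (hf : Continuous f) {a b : ℝ} (hab : a ≤ b) (hlim : Tendsto f atTop (𝓝 (f b))) :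
    IsCompact (f '' Ici a) := by
  have hrange : range (fun t => f (a + |t|)) = f '' Ici a := by
    ext x
    constructor
    · rintro ⟨t, rfl⟩
      exact ⟨a + |t|, le_add_of_nonneg_right (abs_nonneg t), rfl⟩
    · rintro ⟨ξ, hξ, rfl⟩
      exact ⟨ξ - a, by simp only [abs_of_nonneg (sub_nonneg.2 (mem_Ici.1 hξ)), add_sub_cancel]⟩
  have hcocompact : Tendsto (fun t => f (a + |t|)) (cocompact ℝ) (𝓝 (f b)) :=
    hlim.comp (tendsto_atTop_add_const_left _ a tendsto_norm_cocompact_atTop)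
  have hb : f b ∈ f '' Ici a := mem_image_of_mem f hab
  simpa [hrange, insert_eq_of_mem hb] using
    hcocompact.isCompact_insert_range_of_cocompact (by fun_prop)

section Integral

variable {X E : Type*} [MeasurableSpace X] [NormedAddCommGroup E] [NormedSpace ℝ E]
  [CompleteSpace E]

theorem ProperCone.integral_mem {μ : Measure X} (C : ProperCone ℝ E) {F : X → E}
    (hF : Integrable F μ) (hFC : ∀ᵐ x ∂μ, F x ∈ C) : ∫ x, F x ∂μ ∈ C := by
  by_contra hnot
  obtain ⟨f, hfC, hf⟩ := C.hyperplane_separation_point hnot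
  have hnonneg : 0 ≤ ∫ x, f (F x) ∂μ :=
    integral_nonneg_of_ae (hFC.mono fun x hx => hfC _ hx)
  rw [f.integral_comp_comm hF] at hnonneg
  exact hf.not_ge hnonneg

theorem exists_measure_integral_eq_of_mem_hull [MeasurableSingletonClass X]
    {F : X → E} {s : Set X} {p : E} (hp : p ∈ PointedCone.hull ℝ (F '' s)) :
    ∃ K : Measure X, K sᶜ = 0 ∧ Integrable F K ∧ ∫ x, F x ∂K = p := by
  obtain ⟨k, c, a, hc, has, rfl⟩ := PointedCone.mem_hull_image_iff_exists_fin.1 hp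
  let atom (j : Fin k) : Measure X := ENNReal.ofReal (c j) • Measure.dirac (a j)
  have hint (j : Fin k) : Integrable F (atom j) :=
    ((integrable_const (F (a j))).congr (ae_eq_dirac F).symm).smul_measure ENNReal.ofReal_ne_top
  refine ⟨∑ j, atom j, ?_, integrable_finsetSum_measure.2 fun j _ => hint j, ?_⟩
  · simp [atom, Measure.dirac_apply, has]
  · rw [integral_finsetSum_measure fun j _ => hint j]
    simp [atom, integral_smul_measure, integral_dirac, ENNReal.toReal_ofReal (hc _)]

end Integral

open Real

namespace Stmt12

variable {m : ℕ} {u : Fin m → ℝ} {um : ℝ}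

theorem g_castSucc (j : Fin m) (ξ : ℝ) : g m u um j.castSucc ξ = exp (u j * ξ) - 1 :=
  dif_pos j.isLt

theorem g_last (ξ : ℝ) : g m u um (Fin.last m) ξ = max |ξ| 1 * exp (max um 1 * |ξ|) :=
  dif_neg (lt_irrefl m)

theorem one_le_g_last (ξ : ℝ) : 1 ≤ g m u um (Fin.last m) ξ := by
  rw [g_last]
  exact one_le_mul_of_one_le_of_one_le (le_max_right _ _) (one_le_exp (by positivity))

theorem continuous_g (i : Fin (m + 1)) : Continuous (g m u um i) := by
  induction i using Fin.lastCases with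
  | last => simp only [funext g_last]; fun_prop
  | cast j => simp only [funext (g_castSucc j)]; fun_prop

variable (m u um) in
noncomputable def gVec (ξ : ℝ) : Fin (m + 1) → ℝ := fun i => g m u um i ξ

variable (m u um) in
noncomputable def gNormalized (ξ : ℝ) : Fin (m + 1) → ℝ :=
  (g m u um (Fin.last m) ξ)⁻¹ • gVec m u um ξ

theorem gNormalized_last (ξ : ℝ) : gNormalized m u um ξ (Fin.last m) = 1 :=
  inv_mul_cancel₀ (zero_lt_one.trans_le (one_le_g_last ξ)).ne'

theorem continuous_gNormalized : Continuous (gNormalized m u um) := by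
  have hpos (ξ : ℝ) : g m u um (Fin.last m) ξ ≠ 0 := (zero_lt_one.trans_le (one_le_g_last ξ)).ne'
  exact ((continuous_g _).inv₀ hpos).smul (continuous_pi continuous_g)

theorem abs_gNormalized_castSucc_le {j : Fin m} (hub : u j ≤ um) {ξ : ℝ} (hξ : 1 ≤ ξ) :
    |gNormalized m u um ξ j.castSucc| ≤ 2 / ξ := by
  have hξ₀ : 0 < ξ := one_pos.trans_le hξ
  set M := max um 1
  have hexp : exp (u j * ξ) ≤ exp (M * ξ) :=
    exp_le_exp.2 (mul_le_mul_of_nonneg_right (hub.trans (le_max_left _ _)) hξ₀.le)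
  have hone : 1 ≤ exp (M * ξ) := one_le_exp (by positivity)
  have hnum : |g m u um j.castSucc ξ| ≤ 2 * exp (M * ξ) := by
    rw [g_castSucc, abs_le]
    constructor <;> linarith [exp_pos (u j * ξ)]
  have hden : g m u um (Fin.last m) ξ = ξ * exp (M * ξ) := by
    rw [g_last, abs_of_pos hξ₀, max_eq_left hξ]
  have hden_pos : 0 < ξ * exp (M * ξ) := mul_pos hξ₀ (exp_pos _)
  have hquot : gNormalized m u um ξ j.castSucc = g m u um j.castSucc ξ / (ξ * exp (M * ξ)) := by
    rw [gNormalized, Pi.smul_apply, hden, smul_eq_mul, inv_mul_eq_div]; rfl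
  rw [hquot, abs_div, abs_of_pos hden_pos, div_le_div_iff₀ hden_pos hξ₀]
  calc |g m u um j.castSucc ξ| * ξ ≤ 2 * exp (M * ξ) * ξ :=
        mul_le_mul_of_nonneg_right hnum hξ₀.le
    _ = 2 * (ξ * exp (M * ξ)) := by ring

theorem tendsto_gNormalized_atTop (hub : ∀ j, u j ≤ um) :
    Tendsto (gNormalized m u um) atTop (𝓝 (gNormalized m u um 0)) := by
  rw [tendsto_pi_nhds]
  intro i
  induction i using Fin.lastCases with
  | last => simp only [gNormalized_last]; exact tendsto_const_nhds
  | cast j =>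
    have h0 : gNormalized m u um 0 j.castSucc = 0 := by
      simp [gNormalized, gVec, g_castSucc]
    rw [h0]
    refine squeeze_zero_norm' ?_ ((tendsto_const_nhds (x := (2 : ℝ))).div_atTop tendsto_id)
    filter_upwards [eventually_ge_atTop 1] with ξ hξ
    exact abs_gNormalized_castSucc_le (hub j) hξ

theorem isClosed_hull_gVec_image {y : ℝ} (hy : 0 ≤ y) (hub : ∀ j, u j ≤ um) :
    IsClosed (PointedCone.hull ℝ (gVec m u um '' Ici (-y)) : Set (Fin (m + 1) → ℝ)) := by
  have hcompact : IsCompact (gNormalized m u um '' Ici (-y)) :=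
    isCompact_image_Ici_of_tendsto_atTop continuous_gNormalized (by linarith)
      (tendsto_gNormalized_atTop hub)
  rw [← PointedCone.hull_image_smul_of_pos fun ξ _ => inv_pos.2 (one_pos.trans_le
    (one_le_g_last (u := u) (um := um) ξ))]
  exact PointedCone.isClosed_hull_of_isCompact hcompact (ContinuousLinearMap.proj (Fin.last m))
    (by rintro _ ⟨ξ, -, rfl⟩; exact gNormalized_last ξ)

theorem setOf_sum_smul_gVec_eq_hull (y : ℝ) :
    {x : Fin (m + 1) → ℝ | ∃ (k : ℕ) (c : Fin k → ℝ) (ξ : Fin k → ℝ),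
        (∀ j, 0 ≤ c j) ∧ (∀ j, -y ≤ ξ j) ∧ x = ∑ j : Fin k, c j • fun i => g m u um i (ξ j)} =
      PointedCone.hull ℝ (gVec m u um '' Ici (-y)) :=
  Set.ext fun _ => (PointedCone.mem_hull_image_iff_exists_fin (f := gVec m u um)).symm

/-- Krein–Nudelman generalized moment problem: let
`0 < u_1 < … < u_m` and `y ≥ 0`.  There exists a non-negative measure `K` on
`[−y,∞)` with `∫ g_i dK = p^i` for `i = 1,…,m+1` if and only if
`(p^1,…,p^{m+1})` lies in the closed conic hull of
`{(g_1(ξ),…,g_{m+1}(ξ)) : ξ ∈ [−y,∞)}`. -/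
theorem generalized_moment_problem_solvable_iff
    (m : ℕ) (hm : 0 < m) (u : Fin m → ℝ)
    (humono : StrictMono u)
    (y : ℝ) (hy : 0 ≤ y) (p : Fin (m + 1) → ℝ) :
    (∃ K : Measure ℝ,
        K (Set.Iio (-y)) = 0 ∧
        (∀ i : Fin (m + 1),
          Integrable (g m u (u ⟨m - 1, by omega⟩) i) K) ∧
        (∀ i : Fin (m + 1),
          ∫ ξ, g m u (u ⟨m - 1, by omega⟩) i ξ ∂K = p i))
      ↔
    p ∈ closure {x : Fin (m + 1) → ℝ |
        ∃ (k : ℕ) (c : Fin k → ℝ) (ξ : Fin k → ℝ),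
          (∀ j, 0 ≤ c j) ∧ (∀ j, -y ≤ ξ j) ∧
          x = ∑ j : Fin k, c j • fun i => g m u (u ⟨m - 1, by omega⟩) i (ξ j)} := by
  have hub : ∀ j, u j ≤ u ⟨m - 1, by omega⟩ := fun j =>
    humono.monotone (Fin.le_def.2 (by simp only; omega))
  rw [setOf_sum_smul_gVec_eq_hull]
  constructor
  · rintro ⟨K, hK, hint, hmom⟩
    have hp : ∫ ξ, gVec m u _ ξ ∂K = p := funext fun i => (eval_integral hint i).trans (hmom i)
    have hsupp : ∀ᵐ ξ ∂K, -y ≤ ξ := by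
      simpa using measure_eq_zero_iff_ae_notMem.1 hK
    rw [← hp]
    exact ProperCone.integral_mem (Submodule.closure (PointedCone.hull ℝ _))
      (Integrable.of_eval hint) (hsupp.mono fun ξ hξ => subset_closure (PointedCone.subset_hull ⟨ξ, hξ, rfl⟩))
  · intro hp
    rw [(isClosed_hull_gVec_image hy hub).closure_eq] at hp
    obtain ⟨K, hK, hint, hKp⟩ := exists_measure_integral_eq_of_mem_hull hp
    exact ⟨K, by rwa [← compl_Ici], hint.eval,
      fun i => (eval_integral hint.eval i).symm.trans (congrFun hKp i)⟩

end Stmt12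
end
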